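/- Fix a tabular quasi-normal modal logic L = Log({(F,0)}) for a single finite rooted frame F, a modal formula φ, and σ ⊆ sig(φ). Fix a σ-encoding for L and the associated translation rt_{F,L}. If ξ ∈ PL(σ_F) is a uniform σ_F-interpolant for tr_{F,0}(φ) in propositional logic, then rt_{F,L}(ξ) is a strongest L(σ)-implicate of φ. -/
import Mathlib


inductive MForm (α : Type) : Type
  | top : MForm α
  | atom : α → MForm α
  | neg : MForm α → MForm α
  | and : MForm α → MForm α → MForm α
  | box : MForm α → MForm α
deriving DecidableEq

namespace MForm

def imp {α : Type} (φ ψ : MForm α) : MForm α := neg (and φ (neg ψ))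

def dia {α : Type} (φ : MForm α) : MForm α := neg (box (neg φ))

def sig {α : Type} [DecidableEq α] : MForm α → Finset α
  | top => ∅
  | atom p => {p}
  | neg φ => sig φ
  | and φ ψ => sig φ ∪ sig ψ
  | box φ => sig φ

def IsProp {α : Type} : MForm α → Prop
  | top => True
  | atom _ => True
  | neg φ => IsProp φ
  | and φ ψ => IsProp φ ∧ IsProp ψ
  | box _ => False

def subf {α : Type} [DecidableEq α] : MForm α → Finset (MForm α)
  | top => {top}
  | atom p => {atom p}
  | neg φ => insert (neg φ) (subf φ)
  | and φ ψ => insert (and φ ψ) (subf φ ∪ subf ψ)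
  | box φ => insert (box φ) (subf φ)

/-- The dag-size of a formula: the number of its distinct subformulas. -/
def dagSize {α : Type} [DecidableEq α] (φ : MForm α) : ℕ := (subf φ).card

end MForm

def psat {α : Type} (v : α → Prop) : MForm α → Prop
  | .top => True
  | .atom p => v p
  | .neg φ => ¬ psat v φ
  | .and φ ψ => psat v φ ∧ psat v ψ
  | .box _ => True

/-- Propositional tautology. -/
def PTaut {α : Type} (φ : MForm α) : Prop := ∀ v : α → Prop, psat v φ

def bigAnd {α : Type} : List (MForm α) → MForm α
  | [] => .top
  | φ :: l => .and φ (bigAnd l)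

def bigOr {α : Type} (l : List (MForm α)) : MForm α := .neg (bigAnd (l.map .neg))

def boxIter {α : Type} : ℕ → MForm α → MForm α
  | 0, φ => φ
  | n + 1, φ => .box (boxIter n φ)

def diaIter {α : Type} : ℕ → MForm α → MForm α
  | 0, φ => φ
  | n + 1, φ => MForm.dia (diaIter n φ)

/-- `□^{≤n} φ`. -/
def ble {α : Type} (n : ℕ) (φ : MForm α) : MForm α :=
  bigAnd ((List.range (n + 1)).map (fun k => boxIter k φ))

/-- `◇^{≤n} φ`. -/
def dle {α : Type} (n : ℕ) (φ : MForm α) : MForm α := .neg (ble n (.neg φ))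

def substAtoms {α β : Type} (s : α → MForm β) : MForm α → MForm β
  | .top => .top
  | .atom a => s a
  | .neg φ => .neg (substAtoms s φ)
  | .and φ ψ => .and (substAtoms s φ) (substAtoms s ψ)
  | .box φ => .box (substAtoms s φ)


/-- A finite rooted (pointed) frame. -/
structure FFrame where
  W : Type
  fin : Fintype W
  deq : DecidableEq W
  R : W → W → Prop
  root : W
  rooted : ∀ w, Relation.ReflTransGen R root w

attribute [instance] FFrame.fin FFrame.deq

def sat (F : FFrame) (V : F.W → ℕ → Prop) : F.W → MForm ℕ → Prop
  | _, .top => True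
  | w, .atom p => V w p
  | w, .neg φ => ¬ sat F V w φ
  | w, .and φ ψ => sat F V w φ ∧ sat F V w ψ
  | w, .box φ => ∀ v, F.R w v → sat F V v φ

/-- The logic determined by a (finite) family of finite rooted frames. -/
def Log {ι : Type} (Fr : ι → FFrame) : Set (MForm ℕ) :=
  {φ | ∀ i, ∀ V : (Fr i).W → ℕ → Prop, sat (Fr i) V (Fr i).root φ}

def StrImp (L : Set (MForm ℕ)) (σ : Finset ℕ) (φ χ : MForm ℕ) : Prop :=
  χ.sig ⊆ σ ∧ φ.imp χ ∈ L ∧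
    ∀ ψ : MForm ℕ, ψ.sig ⊆ σ → φ.imp ψ ∈ L → χ.imp ψ ∈ L

def CraigInt (L : Set (MForm ℕ)) (φ ψ χ : MForm ℕ) : Prop :=
  φ.imp χ ∈ L ∧ χ.imp ψ ∈ L ∧ χ.sig ⊆ φ.sig ∩ ψ.sig

def HasCIP (L : Set (MForm ℕ)) : Prop :=
  ∀ φ ψ : MForm ℕ, φ.imp ψ ∈ L → ∃ χ, CraigInt L φ ψ χ

def IsBisim (σ : Finset ℕ) (F₁ : FFrame) (V₁ : F₁.W → ℕ → Prop)
    (F₂ : FFrame) (V₂ : F₂.W → ℕ → Prop) (Z : F₁.W → F₂.W → Prop) : Prop :=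
  (∀ w₁ w₂, Z w₁ w₂ → ∀ p ∈ σ, (V₁ w₁ p ↔ V₂ w₂ p)) ∧
  (∀ w₁ w₂ v₁, Z w₁ w₂ → F₁.R w₁ v₁ → ∃ v₂, F₂.R w₂ v₂ ∧ Z v₁ v₂) ∧
  (∀ w₁ w₂ v₂, Z w₁ w₂ → F₂.R w₂ v₂ → ∃ v₁, F₁.R w₁ v₁ ∧ Z v₁ v₂)

def Bisim (σ : Finset ℕ) (F₁ : FFrame) (V₁ : F₁.W → ℕ → Prop) (w₁ : F₁.W)
    (F₂ : FFrame) (V₂ : F₂.W → ℕ → Prop) (w₂ : F₂.W) : Prop :=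
  ∃ Z, IsBisim σ F₁ V₁ F₂ V₂ Z ∧ Z w₁ w₂

def IsEME (σ : Finset ℕ) (Φ : Finset (MForm ℕ)) : Prop :=
  (∀ φ ∈ Φ, φ.IsProp ∧ φ.sig ⊆ σ) ∧
  (∀ v : ℕ → Prop, ∃ φ ∈ Φ, psat v φ) ∧
  (∀ φ ∈ Φ, ∀ ψ ∈ Φ, φ ≠ ψ → ∀ v : ℕ → Prop, ¬ (psat v φ ∧ psat v ψ))

def IsCover (σ : Finset ℕ) (Φ : Finset (MForm ℕ)) (F : FFrame) (V : F.W → ℕ → Prop) : Prop :=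
  ∀ φ ∈ Φ, ∀ w₁ w₂, sat F V w₁ φ → sat F V w₂ φ →
    ∀ χ : MForm ℕ, χ.IsProp → χ.sig ⊆ σ → (sat F V w₁ χ ↔ sat F V w₂ χ)

noncomputable def coverFml (σ : Finset ℕ) (Φ : Finset (MForm ℕ)) (N : ℕ) : MForm ℕ :=
  bigAnd (Φ.toList.map (fun φ => bigAnd (σ.toList.map (fun p =>
    MForm.imp (dle N (.and φ (.atom p))) (ble N (MForm.imp φ (.atom p)))))))

/-- Satisfaction of `ML(Φ)`-formulas on abstract Φ-models `(F,f)`. -/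
def asat (F : FFrame) (f : F.W → MForm ℕ) : F.W → MForm (MForm ℕ) → Prop
  | _, .top => True
  | w, .atom φ => f w = φ
  | w, .neg δ => ¬ asat F f w δ
  | w, .and δ₁ δ₂ => asat F f w δ₁ ∧ asat F f w δ₂
  | w, .box δ => ∀ v, F.R w v → asat F f v δ

def AbsBisim (F₁ : FFrame) (f₁ : F₁.W → MForm ℕ)
    (F₂ : FFrame) (f₂ : F₂.W → MForm ℕ) (Z : F₁.W → F₂.W → Prop) : Prop :=
  (∀ w₁ w₂, Z w₁ w₂ → f₁ w₁ = f₂ w₂) ∧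
  (∀ w₁ w₂ v₁, Z w₁ w₂ → F₁.R w₁ v₁ → ∃ v₂, F₂.R w₂ v₂ ∧ Z v₁ v₂) ∧
  (∀ w₁ w₂ v₂, Z w₁ w₂ → F₂.R w₂ v₂ → ∃ v₁, F₁.R w₁ v₁ ∧ Z v₁ v₂)

/-- Abstract Φ-bisimilarity of the roots of two abstract Φ-models. -/
def ABisimRoot (F₁ : FFrame) (f₁ : F₁.W → MForm ℕ) (F₂ : FFrame) (f₂ : F₂.W → MForm ℕ) : Prop :=
  ∃ Z, AbsBisim F₁ f₁ F₂ f₂ Z ∧ Z F₁.root F₂.root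

/-- Viewing a formula of `ML(Φ)` as a modal formula (atoms of `Φ` are formulas). -/
def flatten : MForm (MForm ℕ) → MForm ℕ
  | .top => .top
  | .atom φ => φ
  | .neg δ => .neg (flatten δ)
  | .and δ₁ δ₂ => .and (flatten δ₁) (flatten δ₂)
  | .box δ => .box (flatten δ)

/-- `δ ∈ ML(Φ)` is an abstract class identifier (for the Φ-bisimulation class of some
abstract Φ-model for `L = Log Fr`). -/
def IsClassId {ι : Type} (Fr : ι → FFrame) (Φ : Finset (MForm ℕ)) (δ : MForm (MForm ℕ)) : Prop :=
  ∃ i, ∃ f : (Fr i).W → MForm ℕ, (∀ w, f w ∈ Φ) ∧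
    ∀ j, ∀ f' : (Fr j).W → MForm ℕ, (∀ w, f' w ∈ Φ) →
      (asat (Fr j) f' (Fr j).root δ ↔ ABisimRoot (Fr j) f' (Fr i) f)

/-- A σ-encoding for `L = Log Fr`: a set `Γ` of σ-EMEs together with, for each `Φ ∈ Γ`,
a set `Δ Φ` of abstract class identifiers, such that every model based on a frame of the
family has a σ-cover `Φ ∈ Γ` and satisfies some `δ ∈ Δ Φ` at its root. -/
def IsEncoding {ι : Type} (Fr : ι → FFrame) (σ : Finset ℕ)
    (Γ : Finset (Finset (MForm ℕ))) (Δ : Finset (MForm ℕ) → Finset (MForm (MForm ℕ))) : Prop :=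
  (∀ Φ ∈ Γ, IsEME σ Φ) ∧
  (∀ Φ ∈ Γ, ∀ δ ∈ Δ Φ, MForm.sig δ ⊆ Φ ∧ IsClassId Fr Φ δ) ∧
  (∀ i, ∀ V : (Fr i).W → ℕ → Prop, ∃ Φ ∈ Γ, IsCover σ Φ (Fr i) V ∧
    ∃ δ ∈ Δ Φ, sat (Fr i) V (Fr i).root (flatten δ))

/-- `ξ^f`: replace each atom `p_w` by `◇^{≤N}(f(w) ∧ p)`. -/
def xiSub (N : ℕ) (F : FFrame) (f : F.W → MForm ℕ) (ξ : MForm (ℕ × F.W)) : MForm ℕ :=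
  substAtoms (fun pw => dle N (.and (f pw.2) (.atom pw.1))) ξ

/-- The abstract Φ-models on the frame `F` in the class identified by `δ`. -/
noncomputable def fList (F : FFrame) (Φ : Finset (MForm ℕ)) (δ : MForm (MForm ℕ)) :
    List (F.W → MForm ℕ) :=
  (((@Finset.filter (F.W → {x // x ∈ Φ})
      (fun f => asat F (fun w => (f w).1) F.root δ) (Classical.decPred _)
      Finset.univ)).toList).map (fun f w => (f w).1)

/-- The backward translation `rt_{F,L}`. -/
noncomputable def rt (σ : Finset ℕ) (N : ℕ)
    (Γ : Finset (Finset (MForm ℕ))) (Δ : Finset (MForm ℕ) → Finset (MForm (MForm ℕ)))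
    (F : FFrame) (ξ : MForm (ℕ × F.W)) : MForm ℕ :=
  bigAnd (Γ.toList.map (fun Φ =>
    bigAnd ((Δ Φ).toList.map (fun δ =>
      MForm.imp (.and (coverFml σ Φ N) (flatten δ))
        (bigOr ((fList F Φ δ).map (fun f => xiSub N F f ξ)))))))

/-- The forward translation `tr_{F,w}`. -/
noncomputable def tr (F : FFrame) : MForm ℕ → F.W → MForm (ℕ × F.W)
  | .top, _ => .top
  | .atom p, w => .atom (p, w)
  | .neg φ, w => .neg (tr F φ w)
  | .and φ ψ, w => .and (tr F φ w) (tr F ψ w)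
  | .box φ, w =>
      bigAnd (((@Finset.filter _ (F.R w) (Classical.decPred _) Finset.univ).toList).map
        (fun w' => tr F φ w'))

/-- The propositional valuation `v_M` over the atoms `σ_F = σ × W` induced by a model. -/
def vM (F : FFrame) (V : F.W → ℕ → Prop) : ℕ × F.W → Prop := fun pw => V pw.2 pw.1

/-- Uniform propositional `σ'`-interpolant. -/
def UPropInt {β : Type} [DecidableEq β] (σ' : Finset β) (χ ξ : MForm β) : Prop :=
  ξ.IsProp ∧ ξ.sig ⊆ σ' ∧ PTaut (χ.imp ξ) ∧
    ∀ ψ : MForm β, ψ.IsProp → ψ.sig ∩ χ.sig ⊆ σ' → PTaut (χ.imp ψ) → PTaut (ξ.imp ψ)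

/-- Propositional Craig interpolant for a tautological implication. -/
def PCraig {β : Type} [DecidableEq β] (χ₁ χ₂ ξ : MForm β) : Prop :=
  ξ.IsProp ∧ ξ.sig ⊆ χ₁.sig ∩ χ₂.sig ∧ PTaut (χ₁.imp ξ) ∧ PTaut (ξ.imp χ₂)


/-! ### Auxiliary lemmas -/

section Aux

variable {α β γ : Type}

lemma psat_imp {v : α → Prop} {φ ψ : MForm α} :
    psat v (φ.imp ψ) ↔ (psat v φ → psat v ψ) := by
  simp only [MForm.imp, psat]; tauto

lemma psat_bigAnd {v : α → Prop} {l : List (MForm α)} :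
    psat v (bigAnd l) ↔ ∀ χ ∈ l, psat v χ := by
  induction l with
  | nil => simp [bigAnd, psat]
  | cons a l ih => simp [bigAnd, psat, ih]

lemma sat_imp {F : FFrame} {V : F.W → ℕ → Prop} {w : F.W} {φ ψ : MForm ℕ} :
    sat F V w (φ.imp ψ) ↔ (sat F V w φ → sat F V w ψ) := by
  simp only [MForm.imp, sat]; tauto

lemma sat_bigAnd {F : FFrame} {V : F.W → ℕ → Prop} {w : F.W} {l : List (MForm ℕ)} :
    sat F V w (bigAnd l) ↔ ∀ χ ∈ l, sat F V w χ := by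
  induction l with
  | nil => simp [bigAnd, sat]
  | cons a l ih => simp [bigAnd, sat, ih]

lemma sat_bigOr {F : FFrame} {V : F.W → ℕ → Prop} {w : F.W} {l : List (MForm ℕ)} :
    sat F V w (bigOr l) ↔ ∃ χ ∈ l, sat F V w χ := by
  simp only [bigOr, sat, sat_bigAnd, List.mem_map]
  push_neg
  constructor
  · rintro ⟨χ, ⟨ψ, hψ, rfl⟩, h⟩
    exact ⟨ψ, hψ, by simpa [sat] using h⟩
  · rintro ⟨ψ, hψ, h⟩
    exact ⟨.neg ψ, ⟨ψ, hψ, rfl⟩, by simpa [sat] using h⟩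

lemma mem_sig_bigAnd [DecidableEq α] {l : List (MForm α)} {a : α} :
    a ∈ (bigAnd l).sig ↔ ∃ χ ∈ l, a ∈ χ.sig := by
  induction l with
  | nil => simp [bigAnd, MForm.sig]
  | cons b l ih => simp [bigAnd, MForm.sig, ih]

lemma sig_imp [DecidableEq α] (φ ψ : MForm α) :
    (φ.imp ψ).sig = φ.sig ∪ ψ.sig := rfl

lemma isProp_bigAnd {l : List (MForm α)} (h : ∀ χ ∈ l, MForm.IsProp χ) :
    MForm.IsProp (bigAnd l) := by
  induction l with
  | nil => trivial
  | cons a l ih =>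
      exact ⟨h a (by simp), ih fun χ hχ => h χ (by simp [hχ])⟩

lemma psat_congr [DecidableEq α] {v v' : α → Prop} {χ : MForm α}
    (h : ∀ a ∈ χ.sig, (v a ↔ v' a)) : psat v χ ↔ psat v' χ := by
  induction χ with
  | top => simp [psat]
  | atom p => simpa [psat, MForm.sig] using h p (by simp [MForm.sig])
  | neg φ ih => simp only [psat]; rw [ih h]
  | and φ ψ ih₁ ih₂ =>
      simp only [psat]
      rw [ih₁ fun a ha => h a (by simp [MForm.sig, ha]),
          ih₂ fun a ha => h a (by simp [MForm.sig, ha])]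
  | box φ _ => simp [psat]

lemma sat_isProp {F : FFrame} {V : F.W → ℕ → Prop} {w : F.W} {χ : MForm ℕ}
    (h : χ.IsProp) : sat F V w χ ↔ psat (V w) χ := by
  induction χ with
  | top => simp [sat, psat]
  | atom p => simp [sat, psat]
  | neg φ ih => simp only [sat, psat]; rw [ih h]
  | and φ ψ ih₁ ih₂ => simp only [sat, psat]; rw [ih₁ h.1, ih₂ h.2]
  | box φ _ => exact absurd h id

end Aux

section Steps

/-- `k`-step reachability. -/
def stepsR (F : FFrame) : ℕ → F.W → F.W → Prop
  | 0, a, b => a = b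
  | n+1, a, c => ∃ b, F.R a b ∧ stepsR F n b c

lemma stepsR_snoc {F : FFrame} : ∀ {k : ℕ} {a b c : F.W},
    stepsR F k a b → F.R b c → stepsR F (k+1) a c := by
  intro k
  induction k with
  | zero => rintro a b c rfl h; exact ⟨c, h, rfl⟩
  | succ k ih =>
      rintro a b c ⟨d, had, hd⟩ h
      exact ⟨d, had, ih hd h⟩

lemma sat_boxIter {F : FFrame} {V : F.W → ℕ → Prop} {χ : MForm ℕ} :
    ∀ {k : ℕ} {w : F.W}, sat F V w (boxIter k χ) ↔ ∀ u, stepsR F k w u → sat F V u χ := by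
  intro k
  induction k with
  | zero =>
      intro w
      constructor
      · rintro h u rfl; exact h
      · intro h; exact h w rfl
  | succ k ih =>
      intro w
      constructor
      · rintro h u ⟨b, hwb, hb⟩
        exact ih.1 (h b hwb) u hb
      · intro h v hv
        exact ih.2 fun u hu => h u ⟨v, hv, hu⟩

lemma sat_ble {F : FFrame} {V : F.W → ℕ → Prop} {χ : MForm ℕ} {n : ℕ} {w : F.W} :
    sat F V w (ble n χ) ↔ ∀ k ≤ n, ∀ u, stepsR F k w u → sat F V u χ := by
  simp only [ble, sat_bigAnd, List.mem_map, List.mem_range]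
  constructor
  · intro h k hk u hu
    exact sat_boxIter.1 (h _ ⟨k, Nat.lt_succ_of_le hk, rfl⟩) u hu
  · rintro h χ' ⟨k, hk, rfl⟩
    exact sat_boxIter.2 (h k (Nat.lt_succ_iff.1 hk))

lemma sat_dle {F : FFrame} {V : F.W → ℕ → Prop} {χ : MForm ℕ} {n : ℕ} {w : F.W} :
    sat F V w (dle n χ) ↔ ∃ k ≤ n, ∃ u, stepsR F k w u ∧ sat F V u χ := by
  have : sat F V w (dle n χ) ↔ ¬ sat F V w (ble n (.neg χ)) := Iff.rfl
  rw [this, sat_ble]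
  push_neg
  constructor
  · rintro ⟨k, hk, u, hu, h⟩
    exact ⟨k, hk, u, hu, not_not.1 h⟩
  · rintro ⟨k, hk, u, hu, h⟩
    exact ⟨k, hk, u, hu, not_not.2 h⟩

lemma sat_dle_self {F : FFrame} {V : F.W → ℕ → Prop} {χ : MForm ℕ} {n : ℕ} {w : F.W}
    (h : sat F V w χ) : sat F V w (dle n χ) :=
  sat_dle.2 ⟨0, Nat.zero_le _, w, rfl, h⟩

lemma reach_le_card (F : FFrame) (w : F.W) :
    ∃ k ≤ Fintype.card F.W, stepsR F k F.root w := by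
  classical
  set N := Fintype.card F.W with hN
  let g : ℕ → Finset F.W := fun k =>
    Nat.rec {F.root} (fun _ s => s ∪ Finset.univ.filter (fun v => ∃ u ∈ s, F.R u v)) k
  have hmono : ∀ k, g k ⊆ g (k+1) := fun k => Finset.subset_union_left
  have hmono' : ∀ {j k}, j ≤ k → g j ⊆ g k := by
    intro j k h
    induction h with
    | refl => exact Finset.Subset.refl _
    | step h ih => exact ih.trans (hmono _)
  have hsteps : ∀ k, ∀ w ∈ g k, ∃ j ≤ k, stepsR F j F.root w := by
    intro k
    induction k with
    | zero =>
        intro w hw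
        have hw' : w = F.root := by simpa [g] using hw
        exact ⟨0, le_refl _, hw'.symm⟩
    | succ k ih =>
        intro w hw
        rw [show g (k+1) = g k ∪ Finset.univ.filter (fun v => ∃ u ∈ g k, F.R u v) from rfl] at hw
        rcases Finset.mem_union.1 hw with hw | hw
        · obtain ⟨j, hj, hs⟩ := ih w hw
          exact ⟨j, hj.trans (Nat.le_succ _), hs⟩
        · obtain ⟨u, hu, hR⟩ := (Finset.mem_filter.1 hw).2
          obtain ⟨j, hj, hs⟩ := ih u hu
          exact ⟨j + 1, Nat.succ_le_succ hj, stepsR_snoc hs hR⟩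
  have hstab : ∃ k ≤ N, g (k+1) = g k := by
    by_contra h
    push_neg at h
    have hcard : ∀ k ≤ N, k + 1 ≤ (g k).card := by
      intro k
      induction k with
      | zero =>
          intro _
          simp [g]
      | succ k ih =>
          intro hk
          have hk' : k ≤ N := le_of_lt (Nat.lt_of_succ_le hk)
          have h1 : k + 1 ≤ (g k).card := ih hk'
          have h2 : (g k).card < (g (k+1)).card :=
            Finset.card_lt_card (lt_of_le_of_ne (hmono k) (fun he => h k hk' he.symm))
          omega
    have h1 := hcard N le_rfl
    have h2 : (g N).card ≤ N := by
      simpa [hN] using Finset.card_le_univ (g N)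
    omega
  obtain ⟨k, hkN, hfix⟩ := hstab
  have hreach : ∀ w, w ∈ g k := by
    intro w
    have h := F.rooted w
    induction h with
    | refl => exact hmono' (Nat.zero_le k) (Finset.mem_singleton_self _)
    | tail hab hbc ih =>
        rw [← hfix]
        exact Finset.mem_union_right _
          (Finset.mem_filter.2 ⟨Finset.mem_univ _, _, ih, hbc⟩)
  obtain ⟨j, hj, hs⟩ := hsteps k w (hreach w)
  exact ⟨j, hj.trans hkN, hs⟩

end Steps

section Sig

variable {α β γ : Type}

lemma sig_boxIter [DecidableEq α] (k : ℕ) (χ : MForm α) :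
    (boxIter k χ).sig = χ.sig := by
  induction k with
  | zero => rfl
  | succ k ih => simpa [boxIter, MForm.sig] using ih

lemma sig_ble [DecidableEq α] (n : ℕ) (χ : MForm α) :
    (ble n χ).sig ⊆ χ.sig := by
  intro a ha
  obtain ⟨χ', hχ', ha'⟩ := mem_sig_bigAnd.1 ha
  obtain ⟨k, _, rfl⟩ := List.mem_map.1 hχ'
  rwa [sig_boxIter] at ha'

lemma sig_dle [DecidableEq α] (n : ℕ) (χ : MForm α) :
    (dle n χ).sig ⊆ χ.sig := by
  intro a ha
  exact sig_ble n (.neg χ) ha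

lemma sig_substAtoms [DecidableEq α] [DecidableEq β] (s : α → MForm β) (ξ : MForm α) :
    ∀ a ∈ (substAtoms s ξ).sig, ∃ b ∈ ξ.sig, a ∈ (s b).sig := by
  induction ξ with
  | top => simp [substAtoms, MForm.sig]
  | atom p => intro a ha; exact ⟨p, by simp [MForm.sig], ha⟩
  | neg φ ih => exact ih
  | and φ ψ ih₁ ih₂ =>
      intro a ha
      rcases Finset.mem_union.1 ha with ha | ha
      · obtain ⟨b, hb, h⟩ := ih₁ a ha
        exact ⟨b, Finset.mem_union_left _ hb, h⟩
      · obtain ⟨b, hb, h⟩ := ih₂ a ha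
        exact ⟨b, Finset.mem_union_right _ hb, h⟩
  | box φ ih => exact ih

lemma sig_flatten (δ : MForm (MForm ℕ)) :
    ∀ a ∈ (flatten δ).sig, ∃ φ' ∈ δ.sig, a ∈ φ'.sig := by
  induction δ with
  | top => simp [flatten, MForm.sig]
  | atom φ' => intro a ha; exact ⟨φ', by simp [MForm.sig], ha⟩
  | neg δ ih => exact ih
  | and δ₁ δ₂ ih₁ ih₂ =>
      intro a ha
      rcases Finset.mem_union.1 ha with ha | ha
      · obtain ⟨b, hb, h⟩ := ih₁ a ha
        exact ⟨b, Finset.mem_union_left _ hb, h⟩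
      · obtain ⟨b, hb, h⟩ := ih₂ a ha
        exact ⟨b, Finset.mem_union_right _ hb, h⟩
  | box δ ih => exact ih

lemma sig_tr (F : FFrame) (χ : MForm ℕ) :
    ∀ w : F.W, ∀ p u, (p, u) ∈ (tr F χ w).sig → p ∈ χ.sig := by
  induction χ with
  | top => intro w p u h; simp [tr, MForm.sig] at h
  | atom q =>
      intro w p u h
      simp only [tr, MForm.sig, Finset.mem_singleton, Prod.mk.injEq] at h
      simp [MForm.sig, h.1]
  | neg φ ih => intro w p u h; exact ih w p u h
  | and φ ψ ih₁ ih₂ =>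
      intro w p u h
      rcases Finset.mem_union.1 h with h | h
      · exact Finset.mem_union_left _ (ih₁ w p u h)
      · exact Finset.mem_union_right _ (ih₂ w p u h)
  | box φ ih =>
      intro w p u h
      rw [show tr F (.box φ) w = bigAnd
        (((@Finset.filter _ (F.R w) (Classical.decPred _) Finset.univ).toList).map
          (fun w' => tr F φ w')) from rfl] at h
      obtain ⟨χ', hχ', h'⟩ := mem_sig_bigAnd.1 h
      obtain ⟨w', _, rfl⟩ := List.mem_map.1 hχ'
      exact ih w' p u h'

lemma isProp_tr (F : FFrame) (χ : MForm ℕ) : ∀ w : F.W, (tr F χ w).IsProp := by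
  induction χ with
  | top => intro w; trivial
  | atom q => intro w; trivial
  | neg φ ih => exact ih
  | and φ ψ ih₁ ih₂ => exact fun w => ⟨ih₁ w, ih₂ w⟩
  | box φ ih =>
      intro w
      rw [show tr F (.box φ) w = bigAnd
        (((@Finset.filter _ (F.R w) (Classical.decPred _) Finset.univ).toList).map
          (fun w' => tr F φ w')) from rfl]
      refine isProp_bigAnd ?_
      intro χ' hχ'
      obtain ⟨w', _, rfl⟩ := List.mem_map.1 hχ'
      exact ih w'

end Sig

section Tr

lemma mem_RsuccList {F : FFrame} {w u : F.W} :
    u ∈ (@Finset.filter _ (F.R w) (Classical.decPred _) Finset.univ).toList ↔ F.R w u := by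
  rw [Finset.mem_toList]
  exact ⟨fun h => ((@Finset.mem_filter _ _ (Classical.decPred _) _ _).1 h).2,
         fun h => (@Finset.mem_filter _ _ (Classical.decPred _) _ _).2 ⟨Finset.mem_univ _, h⟩⟩


lemma sat_substAtoms {γ : Type} {F : FFrame} {V : F.W → ℕ → Prop} {w : F.W}
    (s : γ → MForm ℕ) (ξ : MForm γ) (hξ : ξ.IsProp) :
    sat F V w (substAtoms s ξ) ↔ psat (fun a => sat F V w (s a)) ξ := by
  induction ξ with
  | top => simp [substAtoms, sat, psat]
  | atom p => simp [substAtoms, psat]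
  | neg φ ih => simp only [substAtoms, sat, psat]; rw [ih hξ]
  | and φ ψ ih₁ ih₂ => simp only [substAtoms, sat, psat]; rw [ih₁ hξ.1, ih₂ hξ.2]
  | box φ _ => exact absurd hξ id

lemma sat_tr {F : FFrame} {V : F.W → ℕ → Prop} (χ : MForm ℕ) :
    ∀ w : F.W, sat F V w χ ↔ psat (vM F V) (tr F χ w) := by
  induction χ with
  | top => intro w; simp [tr, sat, psat]
  | atom q => intro w; simp [tr, sat, psat, vM]
  | neg φ ih => intro w; simp only [tr, sat, psat]; rw [ih w]
  | and φ ψ ih₁ ih₂ => intro w; simp only [tr, sat, psat]; rw [ih₁ w, ih₂ w]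
  | box φ ih =>
      intro w
      rw [show tr F (.box φ) w = bigAnd
        (((@Finset.filter _ (F.R w) (Classical.decPred _) Finset.univ).toList).map
          (fun w' => tr F φ w')) from rfl, psat_bigAnd]
      constructor
      · intro h χ' hχ'
        obtain ⟨w', hw', rfl⟩ := List.mem_map.1 hχ'
        exact (ih w').1 (h w' (mem_RsuccList.1 hw'))
      · intro h w' hw'
        exact (ih w').2 (h _ (List.mem_map.2 ⟨w', mem_RsuccList.2 hw', rfl⟩))

end Tr

section Canon

/-- The canonical member of `Φ` satisfied by a valuation. -/
noncomputable def canon (Φ : Finset (MForm ℕ)) (v : ℕ → Prop) : MForm ℕ :=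
  @dite _ (∃ φ' ∈ Φ, psat v φ') (Classical.propDecidable _) (fun h => h.choose) (fun _ => .top)

lemma canon_mem {Φ : Finset (MForm ℕ)} {v : ℕ → Prop} (h : ∃ φ' ∈ Φ, psat v φ') :
    canon Φ v ∈ Φ := by
  rw [canon, dif_pos h]
  exact h.choose_spec.1

lemma canon_psat {Φ : Finset (MForm ℕ)} {v : ℕ → Prop} (h : ∃ φ' ∈ Φ, psat v φ') :
    psat v (canon Φ v) := by
  rw [canon, dif_pos h]; exact h.choose_spec.2

lemma canon_eq {σ : Finset ℕ} {Φ : Finset (MForm ℕ)} (hE : IsEME σ Φ) {v : ℕ → Prop}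
    {φ' : MForm ℕ} (hφ' : φ' ∈ Φ) (hv : psat v φ') : canon Φ v = φ' := by
  have hex : ∃ ψ ∈ Φ, psat v ψ := ⟨φ', hφ', hv⟩
  by_contra hne
  exact hE.2.2 (canon Φ v) (canon_mem hex) φ' hφ' hne v ⟨canon_psat hex, hv⟩

/-- The canonical abstract labelling of a model. -/
noncomputable def canonF (Φ : Finset (MForm ℕ)) (F : FFrame) (V : F.W → ℕ → Prop) :
    F.W → MForm ℕ := fun w => canon Φ (V w)

lemma canonF_mem {σ : Finset ℕ} {Φ : Finset (MForm ℕ)} (hE : IsEME σ Φ)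
    {F : FFrame} {V : F.W → ℕ → Prop} (w : F.W) : canonF Φ F V w ∈ Φ :=
  canon_mem (hE.2.1 (V w))

lemma canonF_psat {σ : Finset ℕ} {Φ : Finset (MForm ℕ)} (hE : IsEME σ Φ)
    {F : FFrame} {V : F.W → ℕ → Prop} (w : F.W) : psat (V w) (canonF Φ F V w) :=
  canon_psat (hE.2.1 (V w))

lemma sat_flatten {σ : Finset ℕ} {Φ : Finset (MForm ℕ)} (hE : IsEME σ Φ)
    {F : FFrame} {V : F.W → ℕ → Prop} (δ : MForm (MForm ℕ)) (hδ : δ.sig ⊆ Φ) :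
    ∀ w : F.W, sat F V w (flatten δ) ↔ asat F (canonF Φ F V) w δ := by
  induction δ with
  | top => intro w; simp [flatten, sat, asat]
  | atom φ' =>
      intro w
      have hφ' : φ' ∈ Φ := hδ (by simp [MForm.sig])
      have hprop : φ'.IsProp := (hE.1 φ' hφ').1
      show sat F V w φ' ↔ canonF Φ F V w = φ'
      rw [sat_isProp hprop]
      constructor
      · intro h; exact canon_eq hE hφ' h
      · intro h; rw [show φ' = canonF Φ F V w from h.symm]; exact canonF_psat hE w
  | neg δ ih =>
      intro w
      show ¬ _ ↔ ¬ _
      rw [ih hδ w]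
  | and δ₁ δ₂ ih₁ ih₂ =>
      intro w
      show _ ∧ _ ↔ _ ∧ _
      rw [ih₁ (fun a ha => hδ (Finset.mem_union_left _ ha)) w,
          ih₂ (fun a ha => hδ (Finset.mem_union_right _ ha)) w]
  | box δ ih =>
      intro w
      show (∀ v, F.R w v → _) ↔ (∀ v, F.R w v → _)
      exact forall_congr' fun v => imp_congr_right fun _ => ih hδ v

lemma mem_fList {F : FFrame} {Φ : Finset (MForm ℕ)} {δ : MForm (MForm ℕ)}
    {f : F.W → MForm ℕ} :
    f ∈ fList F Φ δ ↔ (∀ w, f w ∈ Φ) ∧ asat F f F.root δ := by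
  rw [fList, List.mem_map]
  constructor
  · rintro ⟨g, hg, rfl⟩
    rw [Finset.mem_toList] at hg
    have := ((@Finset.mem_filter _ _ (Classical.decPred _) _ _).1 hg).2
    exact ⟨fun w => (g w).2, this⟩
  · rintro ⟨hf, hsat⟩
    refine ⟨fun w => ⟨f w, hf w⟩, ?_, rfl⟩
    rw [Finset.mem_toList]
    exact (@Finset.mem_filter _ _ (Classical.decPred _) _ _).2 ⟨Finset.mem_univ _, hsat⟩

end Canon

section Bisim

lemma bisim_sat {σ : Finset ℕ} {F₁ : FFrame} {V₁ : F₁.W → ℕ → Prop}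
    {F₂ : FFrame} {V₂ : F₂.W → ℕ → Prop} {Z : F₁.W → F₂.W → Prop}
    (hZ : IsBisim σ F₁ V₁ F₂ V₂ Z) (ψ : MForm ℕ) (hψ : ψ.sig ⊆ σ) :
    ∀ w₁ w₂, Z w₁ w₂ → (sat F₁ V₁ w₁ ψ ↔ sat F₂ V₂ w₂ ψ) := by
  induction ψ with
  | top => intro w₁ w₂ _; simp [sat]
  | atom p =>
      intro w₁ w₂ hw
      exact hZ.1 w₁ w₂ hw p (hψ (by simp [MForm.sig]))
  | neg φ ih =>
      intro w₁ w₂ hw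
      show ¬ _ ↔ ¬ _
      rw [ih hψ w₁ w₂ hw]
  | and φ ψ' ih₁ ih₂ =>
      intro w₁ w₂ hw
      show _ ∧ _ ↔ _ ∧ _
      rw [ih₁ (fun a ha => hψ (Finset.mem_union_left _ ha)) w₁ w₂ hw,
          ih₂ (fun a ha => hψ (Finset.mem_union_right _ ha)) w₁ w₂ hw]
  | box φ ih =>
      intro w₁ w₂ hw
      constructor
      · intro h v₂ hv₂
        obtain ⟨v₁, hv₁, hZ'⟩ := hZ.2.2 w₁ w₂ v₂ hw hv₂
        exact (ih hψ v₁ v₂ hZ').1 (h v₁ hv₁)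
      · intro h v₁ hv₁
        obtain ⟨v₂, hv₂, hZ'⟩ := hZ.2.1 w₁ w₂ v₁ hw hv₁
        exact (ih hψ v₁ v₂ hZ').2 (h v₂ hv₂)

end Bisim

section SatChar

lemma sat_coverFml {F : FFrame} {V : F.W → ℕ → Prop} {r : F.W}
    {σ : Finset ℕ} {Φ : Finset (MForm ℕ)} {N : ℕ} :
    sat F V r (coverFml σ Φ N) ↔ ∀ φ' ∈ Φ, ∀ p ∈ σ,
      sat F V r (MForm.imp (dle N (.and φ' (.atom p))) (ble N (MForm.imp φ' (.atom p)))) := by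
  rw [coverFml, sat_bigAnd]
  constructor
  · intro h φ' hφ' p hp
    have h1 := h _ (List.mem_map.2 ⟨φ', Finset.mem_toList.2 hφ', rfl⟩)
    rw [sat_bigAnd] at h1
    exact h1 _ (List.mem_map.2 ⟨p, Finset.mem_toList.2 hp, rfl⟩)
  · intro h χ hχ
    obtain ⟨φ', hφ', rfl⟩ := List.mem_map.1 hχ
    rw [sat_bigAnd]
    intro χ' hχ'
    obtain ⟨p, hp, rfl⟩ := List.mem_map.1 hχ'
    exact h φ' (Finset.mem_toList.1 hφ') p (Finset.mem_toList.1 hp)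

lemma sat_rt {F : FFrame} {V : F.W → ℕ → Prop} {r : F.W} {σ : Finset ℕ} {N : ℕ}
    {Γ : Finset (Finset (MForm ℕ))} {Δ : Finset (MForm ℕ) → Finset (MForm (MForm ℕ))}
    {ξ : MForm (ℕ × F.W)} :
    sat F V r (rt σ N Γ Δ F ξ) ↔ ∀ Φ ∈ Γ, ∀ δ ∈ Δ Φ,
      sat F V r (MForm.imp (.and (coverFml σ Φ N) (flatten δ))
        (bigOr ((fList F Φ δ).map (fun f => xiSub N F f ξ)))) := by
  rw [rt, sat_bigAnd]
  constructor
  · intro h Φ hΦ δ hδ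
    have h1 := h _ (List.mem_map.2 ⟨Φ, Finset.mem_toList.2 hΦ, rfl⟩)
    rw [sat_bigAnd] at h1
    exact h1 _ (List.mem_map.2 ⟨δ, Finset.mem_toList.2 hδ, rfl⟩)
  · intro h χ hχ
    obtain ⟨Φ, hΦ, rfl⟩ := List.mem_map.1 hχ
    rw [sat_bigAnd]
    intro χ' hχ'
    obtain ⟨δ, hδ, rfl⟩ := List.mem_map.1 hχ'
    exact h Φ (Finset.mem_toList.1 hΦ) δ (Finset.mem_toList.1 hδ)

end SatChar
/-- for a tabular quasi-normal logic `L = Log({(F,0)})` determined by a single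
finite rooted frame `F`, a σ-encoding for `L`, and a uniform `σ_F`-interpolant `ξ` of
`tr_{F,0}(φ)` in propositional logic, `rt_{F,L}(ξ)` is a strongest `L(σ)`-implicate
of `φ` (where `N = |F|`). -/
theorem stmt9 (F : FFrame) (φ : MForm ℕ) (σ : Finset ℕ) (hσ : σ ⊆ φ.sig)
    (Γ : Finset (Finset (MForm ℕ))) (Δ : Finset (MForm ℕ) → Finset (MForm (MForm ℕ)))
    (henc : IsEncoding (fun _ : Unit => F) σ Γ Δ)
    (ξ : MForm (ℕ × F.W))
    (hξ : UPropInt (σ ×ˢ Finset.univ) (tr F φ F.root) ξ) :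
    StrImp (Log (fun _ : Unit => F)) σ φ (rt σ (Fintype.card F.W) Γ Δ F ξ) := by
  obtain ⟨hEME, hΔ, hcov⟩ := henc
  obtain ⟨hξprop, hξsig, hξtaut, hξuni⟩ := hξ
  set N := Fintype.card F.W with hNdef
  -- a tautology transfer principle
  have hsig_atom : ∀ p : ℕ, (MForm.atom p : MForm ℕ).sig = {p} := fun _ => rfl
  refine ⟨?_, ?_, ?_⟩
  · -- signature of rt is contained in σ
    intro a ha
    rw [rt] at ha
    obtain ⟨χ, hχ, ha⟩ := mem_sig_bigAnd.1 ha
    obtain ⟨Φ, hΦ, rfl⟩ := List.mem_map.1 hχ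
    rw [Finset.mem_toList] at hΦ
    obtain ⟨χ', hχ', ha⟩ := mem_sig_bigAnd.1 ha
    obtain ⟨δ, hδ, rfl⟩ := List.mem_map.1 hχ'
    rw [Finset.mem_toList] at hδ
    have hΦσ : ∀ φ' ∈ Φ, (MForm.sig φ') ⊆ σ := fun φ' h => ((hEME Φ hΦ).1 φ' h).2
    rw [sig_imp] at ha
    rcases Finset.mem_union.1 ha with ha | ha
    · rcases Finset.mem_union.1 ha with ha | ha
      · -- coverFml
        rw [coverFml] at ha
        obtain ⟨χ, hχ, ha⟩ := mem_sig_bigAnd.1 ha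
        obtain ⟨φ', hφ', rfl⟩ := List.mem_map.1 hχ
        rw [Finset.mem_toList] at hφ'
        obtain ⟨χ', hχ', ha⟩ := mem_sig_bigAnd.1 ha
        obtain ⟨p, hp, rfl⟩ := List.mem_map.1 hχ'
        rw [Finset.mem_toList] at hp
        rw [sig_imp] at ha
        have hsub : (MForm.and φ' (.atom p)).sig ⊆ σ := by
          intro b hb
          rcases Finset.mem_union.1 hb with hb | hb
          · exact hΦσ φ' hφ' hb
          · rw [hsig_atom, Finset.mem_singleton] at hb; exact hb ▸ hp
        rcases Finset.mem_union.1 ha with ha | ha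
        · exact hsub (sig_dle _ _ ha)
        · refine hsub ?_
          have := sig_ble N (MForm.imp φ' (.atom p)) ha
          rwa [sig_imp] at this
      · -- flatten δ
        obtain ⟨φ', hφ', ha⟩ := sig_flatten δ a ha
        exact hΦσ φ' ((hΔ Φ hΦ δ hδ).1 hφ') ha
    · -- bigOr of xiSub's
      rw [bigOr] at ha
      obtain ⟨χ, hχ, ha⟩ := mem_sig_bigAnd.1 ha
      obtain ⟨χ', hχ', rfl⟩ := List.mem_map.1 hχ
      obtain ⟨f, hf, rfl⟩ := List.mem_map.1 hχ'
      obtain ⟨b, hb, ha⟩ := sig_substAtoms _ ξ a ha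
      have hbσ := Finset.mem_product.1 (hξsig hb)
      rcases Finset.mem_union.1 (sig_dle _ _ ha) with ha | ha
      · exact hΦσ _ ((mem_fList.1 hf).1 b.2) ha
      · rw [hsig_atom, Finset.mem_singleton] at ha
        exact ha ▸ hbσ.1
  · -- φ → rt(ξ) ∈ L
    intro i V
    rw [sat_imp]
    intro hφ
    rw [sat_rt]
    intro Φ hΦ δ hδ
    rw [sat_imp]
    rintro ⟨hcovSat, hflat⟩
    have hE := hEME Φ hΦ
    have hδsig := (hΔ Φ hΦ δ hδ).1
    set fV := canonF Φ F V with hfVdef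
    have hasat : asat F fV F.root δ := (sat_flatten hE δ hδsig F.root).1 hflat
    rw [sat_bigOr]
    refine ⟨xiSub N F fV ξ,
      List.mem_map.2 ⟨fV, mem_fList.2 ⟨canonF_mem hE, hasat⟩, rfl⟩, ?_⟩
    rw [xiSub, sat_substAtoms _ ξ hξprop]
    have hkey : ∀ a ∈ ξ.sig,
        (sat F V F.root (dle N (.and (fV a.2) (.atom a.1))) ↔ vM F V a) := by
      rintro ⟨p, w⟩ ha
      have hp : p ∈ σ := (Finset.mem_product.1 (hξsig ha)).1
      have hsatfV : sat F V w (fV w) :=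
        (sat_isProp (hE.1 _ (canonF_mem hE w)).1).2 (canonF_psat hE w)
      constructor
      · intro hdle
        have hc := sat_coverFml.1 hcovSat (fV w) (canonF_mem hE w) p hp
        rw [sat_imp] at hc
        have hble := hc hdle
        rw [sat_ble] at hble
        obtain ⟨k, hk, hsteps⟩ := reach_le_card F w
        have := hble k hk w hsteps
        rw [sat_imp] at this
        exact this hsatfV
      · intro hV
        obtain ⟨k, hk, hsteps⟩ := reach_le_card F w
        exact sat_dle.2 ⟨k, hk, w, hsteps, hsatfV, hV⟩
    rw [psat_congr hkey]
    exact psat_imp.1 (hξtaut (vM F V)) ((sat_tr φ F.root).1 hφ)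
  · -- strongest implicate
    intro ψ hψsig hψL
    intro i V
    rw [sat_imp]
    intro hrt
    obtain ⟨Φ, hΦ, hcover, δ, hδ, hflat⟩ := hcov () V
    have hE := hEME Φ hΦ
    obtain ⟨hδsig, hδid⟩ := hΔ Φ hΦ δ hδ
    set fV := canonF Φ F V with hfVdef
    have hatomσ : ∀ p ∈ σ, (MForm.atom p : MForm ℕ).sig ⊆ σ := by
      intro p hp b hb
      rw [hsig_atom, Finset.mem_singleton] at hb
      exact hb ▸ hp
    -- the cover formula is satisfied
    have hcovSat : sat F V F.root (coverFml σ Φ N) := by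
      rw [sat_coverFml]
      intro φ' hφ' p hp
      rw [sat_imp]
      intro hdle
      obtain ⟨k0, hk0, u, hst, hu1, hu2⟩ := sat_dle.1 hdle
      rw [sat_ble]
      intro k hk u' hsteps
      rw [sat_imp]
      intro hu'
      exact (hcover φ' hφ' u u' hu1 hu' (.atom p) trivial (hatomσ p hp)).1 hu2
    have h1 := sat_rt.1 hrt Φ hΦ δ hδ
    rw [sat_imp] at h1
    obtain ⟨χ, hχmem, hsatχ⟩ := sat_bigOr.1 (h1 ⟨hcovSat, hflat⟩)
    obtain ⟨f, hf, rfl⟩ := List.mem_map.1 hχmem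
    obtain ⟨hfΦ, hfasat⟩ := mem_fList.1 hf
    have hfVasat : asat F fV F.root δ := (sat_flatten hE δ hδsig F.root).1 hflat
    obtain ⟨i₀, f₀, hf₀Φ, hid⟩ := hδid
    obtain ⟨Z₁, hZ₁, hr₁⟩ := (hid () f hfΦ).1 hfasat
    obtain ⟨Z₂, hZ₂, hr₂⟩ := (hid () fV (canonF_mem hE)).1 hfVasat
    set Z : F.W → F.W → Prop := fun w u => ∃ x, Z₁ w x ∧ Z₂ u x with hZdef
    have hZroot : Z F.root F.root := ⟨F.root, hr₁, hr₂⟩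
    have hfeq : ∀ w u, Z w u → f w = fV u := by
      rintro w u ⟨x, h1', h2'⟩
      exact (hZ₁.1 w x h1').trans (hZ₂.1 u x h2').symm
    -- the derived valuation
    set V' : F.W → ℕ → Prop :=
      fun u p => sat F V F.root (dle N (.and (f u) (.atom p))) with hV'def
    have hvf : vM F V' = fun a => sat F V F.root (dle N (.and (f a.2) (.atom a.1))) := rfl
    -- ψ holds at the root of (F, V')
    have hψV' : sat F V' F.root ψ := by
      have htr : PTaut ((tr F φ F.root).imp (tr F ψ F.root)) := by
        intro v
        rw [psat_imp]
        intro hv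
        have hVv : vM F (fun u p => v (p, u)) = v := rfl
        have := hψL () (fun u p => v (p, u))
        rw [sat_imp] at this
        have h2 := this ((sat_tr φ F.root).2 (by rw [hVv]; exact hv))
        have h3 := (sat_tr ψ F.root).1 h2
        rwa [hVv] at h3
      have htrψsig : (tr F ψ F.root).sig ∩ (tr F φ F.root).sig ⊆ σ ×ˢ Finset.univ := by
        rintro ⟨p, u⟩ ha
        have hp := sig_tr F ψ F.root p u (Finset.mem_inter.1 ha).1
        exact Finset.mem_product.2 ⟨hψsig hp, Finset.mem_univ _⟩
      have hξψ := hξuni (tr F ψ F.root) (isProp_tr F ψ F.root) htrψsig htr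
      have hpsatξ : psat (vM F V') ξ := by
        rw [hvf]
        exact (sat_substAtoms _ ξ hξprop).1 hsatχ
      exact (sat_tr ψ F.root).2 (psat_imp.1 (hξψ (vM F V')) hpsatξ)
    -- Z is a σ-bisimulation between (F, V') and (F, V)
    have hbisim : IsBisim σ F V' F V Z := by
      refine ⟨?_, ?_, ?_⟩
      · intro w u hZw p hp
        have hfw : f w = fV u := hfeq w u hZw
        have hsatfV : sat F V u (fV u) :=
          (sat_isProp (hE.1 _ (canonF_mem hE u)).1).2 (canonF_psat hE u)
        show sat F V F.root (dle N (.and (f w) (.atom p))) ↔ V u p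
        rw [hfw]
        constructor
        · intro hdle
          obtain ⟨k, hk, u', hst, hu'1, hu'2⟩ := sat_dle.1 hdle
          exact (hcover (fV u) (canonF_mem hE u) u' u hu'1 hsatfV
            (.atom p) trivial (hatomσ p hp)).1 hu'2
        · intro hV
          obtain ⟨k, hk, hsteps⟩ := reach_le_card F u
          exact sat_dle.2 ⟨k, hk, u, hsteps, hsatfV, hV⟩
      · rintro w u v₁ ⟨x, h1', h2'⟩ hR
        obtain ⟨x', hRx, hZx⟩ := hZ₁.2.1 w x v₁ h1' hR
        obtain ⟨u', hRu, hZu⟩ := hZ₂.2.2 u x x' h2' hRx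
        exact ⟨u', hRu, x', hZx, hZu⟩
      · rintro w u v₂ ⟨x, h1', h2'⟩ hR
        obtain ⟨x', hRx, hZx⟩ := hZ₂.2.1 u x v₂ h2' hR
        obtain ⟨w', hRw, hZw⟩ := hZ₁.2.2 w x x' h1' hRx
        exact ⟨w', hRw, x', hZw, hZx⟩
    exact (bisim_sat hbisim ψ hψsig F.root F.root hZroot).1 hψV'
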